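/- arXiv:math/0504015 — 4 statements merged into one kernel-verified Lean document; each statement's English description precedes it below -/
import Mathlib

section
/- Let P be a field and W = P[x_1,...,x_n] the free commutative polynomial algebra. If μ : W → W is a bijection such that μ∘s = s∘μ for every P-algebra endomorphism s of W, then there exist a, b ∈ P with a ≠ 0 such that μ(u) = a·u + b for all u ∈ W. -/
/-! Substituting `u` for every variable is an endomorphism sending `X i` to `u`, so a central map
is `u ↦ g(u)` for the one-variable polynomial `g` obtained from `μ (X i)` by identifying all
variables. Surjectivity gives `g(u) = X i` for some `u`; identifying the variables once more
turns this into `g ∘ q = X` in one variable, which forces `deg g = 1`. -/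

open MvPolynomial
open scoped Polynomial

theorem Polynomial.natDegree_eq_one_of_comp_eq_X {R : Type*} [Semiring R] [NoZeroDivisors R]
    [Nontrivial R] {p q : R[X]} (h : p.comp q = Polynomial.X) : p.natDegree = 1 := by
  have hdeg := congrArg Polynomial.natDegree h
  rw [Polynomial.natDegree_comp, Polynomial.natDegree_X] at hdeg
  exact Nat.eq_one_of_mul_eq_one_right hdeg

namespace MvPolynomial

variable {σ R : Type*} [CommSemiring R]

variable (σ R) in
noncomputable def identifyVars : MvPolynomial σ R →ₐ[R] R[X] :=
  aeval fun _ => Polynomial.X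

theorem polynomial_aeval_identifyVars {A : Type*} [CommSemiring A] [Algebra R A]
    (a : A) (p : MvPolynomial σ R) :
    Polynomial.aeval a (identifyVars σ R p) = aeval (fun _ => a) p := by
  simp [identifyVars, comp_aeval_apply]

theorem eq_polynomial_aeval_of_commute_algHom {μ : MvPolynomial σ R → MvPolynomial σ R}
    (hμ : ∀ (s : MvPolynomial σ R →ₐ[R] MvPolynomial σ R) u, μ (s u) = s (μ u)) (i : σ)
    (u : MvPolynomial σ R) :
    μ u = Polynomial.aeval u (identifyVars σ R (μ (X i))) := by
  rw [polynomial_aeval_identifyVars, ← hμ]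
  simp

theorem natDegree_eq_one_of_polynomial_aeval_eq_X [NoZeroDivisors R] [Nontrivial R]
    {g : R[X]} {u : MvPolynomial σ R} {i : σ} (h : Polynomial.aeval u g = X i) :
    g.natDegree = 1 := by
  apply Polynomial.natDegree_eq_one_of_comp_eq_X (q := identifyVars σ R u)
  simpa [identifyVars, Polynomial.comp_eq_aeval, ← Polynomial.aeval_algHom_apply] using
    congrArg (identifyVars σ R) h

end MvPolynomial

theorem stmt_0 {P : Type} [Field P] {n : ℕ} (hn : 1 ≤ n)
    (μ : MvPolynomial (Fin n) P → MvPolynomial (Fin n) P)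
    (hbij : Function.Bijective μ)
    (hcent : ∀ (s : MvPolynomial (Fin n) P →ₐ[P] MvPolynomial (Fin n) P)
      (u : MvPolynomial (Fin n) P), μ (s u) = s (μ u)) :
    ∃ a b : P, a ≠ 0 ∧ ∀ u, μ u = C a * u + C b := by
  let i : Fin n := ⟨0, hn⟩
  have hμ := eq_polynomial_aeval_of_commute_algHom hcent i
  obtain ⟨u, hu⟩ := hbij.2 (X i)
  have hdeg := natDegree_eq_one_of_polynomial_aeval_eq_X ((hμ u).symm.trans hu)
  obtain ⟨a, ha, b, hg⟩ := Polynomial.natDegree_eq_one.mp hdeg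
  refine ⟨a, b, ha, fun v => ?_⟩
  rw [hμ v, ← hg]
  simp [algebraMap_eq]
end

section
/- Let P be a field and W = P[x_1,...,x_n]. If μ : W → W is a central bijection (commutes with all P-algebra endomorphisms), then the restriction of μ to each element of W is given by a single polynomial in one variable: there exists r ∈ P[t] with μ(u) = r(u) for all u ∈ W. -/
open MvPolynomial

section CentralMap

variable {R σ : Type*} [CommSemiring R] {μ : MvPolynomial σ R → MvPolynomial σ R}

/-- `μ (X i)` is fixed by the endomorphism that keeps `X i` and kills every other variable, and
that endomorphism factors through `R[X]`. -/
theorem exists_apply_X_eq_aeval_of_commute [DecidableEq σ]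
    (hcent : ∀ (s : MvPolynomial σ R →ₐ[R] MvPolynomial σ R) u, μ (s u) = s (μ u)) (i : σ) :
    ∃ r : Polynomial R, μ (X i) = Polynomial.aeval (X i) r := by
  let π : MvPolynomial σ R →ₐ[R] Polynomial R := aeval (Pi.single i Polynomial.X)
  let s : MvPolynomial σ R →ₐ[R] MvPolynomial σ R := (Polynomial.aeval (X i)).comp π
  have hs : s (X i) = X i := by simp [s, π]
  refine ⟨π (μ (X i)), ?_⟩
  calc μ (X i) = μ (s (X i)) := by rw [hs]
    _ = Polynomial.aeval (X i) (π (μ (X i))) := hcent s (X i)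

theorem apply_eq_aeval_of_commute
    (hcent : ∀ (s : MvPolynomial σ R →ₐ[R] MvPolynomial σ R) u, μ (s u) = s (μ u))
    {i : σ} {r : Polynomial R} (hr : μ (X i) = Polynomial.aeval (X i) r) (u : MvPolynomial σ R) :
    μ u = Polynomial.aeval u r := by
  let s : MvPolynomial σ R →ₐ[R] MvPolynomial σ R := aeval fun _ => u
  calc μ u = μ (s (X i)) := by simp [s]
    _ = s (Polynomial.aeval (X i) r) := by rw [hcent, hr]
    _ = Polynomial.aeval u r := by simp [s, ← Polynomial.aeval_algHom_apply]

end CentralMap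

theorem stmt_1_general {P : Type} [Field P] {n : ℕ} (hn : 1 ≤ n)
    (μ : MvPolynomial (Fin n) P → MvPolynomial (Fin n) P)
    (hcent : ∀ (s : MvPolynomial (Fin n) P →ₐ[P] MvPolynomial (Fin n) P)
      (u : MvPolynomial (Fin n) P), μ (s u) = s (μ u)) :
    ∃ r : Polynomial P, ∀ u, μ u = Polynomial.aeval u r := by
  obtain ⟨r, hr⟩ := exists_apply_X_eq_aeval_of_commute hcent (⟨0, hn⟩ : Fin n)
  exact ⟨r, apply_eq_aeval_of_commute hcent hr⟩

theorem stmt_1 {P : Type} [Field P] {n : ℕ} (hn : 1 ≤ n)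
    (μ : MvPolynomial (Fin n) P → MvPolynomial (Fin n) P)
    (hbij : Function.Bijective μ)
    (hcent : ∀ (s : MvPolynomial (Fin n) P →ₐ[P] MvPolynomial (Fin n) P)
      (u : MvPolynomial (Fin n) P), μ (s u) = s (μ u)) :
    ∃ r : Polynomial P, ∀ u, μ u = Polynomial.aeval u r :=
  stmt_1_general hn μ hcent
end

section
/- Let P be a field, W = P[x_1,...,x_n], and let u ∈ W be a basic element, i.e., u belongs to some generating set u_1 = u, u_2, ..., u_n such that the P-algebra endomorphism sending x_i ↦ u_i is an automorphism of W. Then the intersection of the kernels of all P-algebra endomorphisms of W that annihilate u equals the ideal generated by u. -/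
/-!
Write `u = φ (X i)` with `φ` an automorphism, and let `π` be the substitution `X i ↦ 0`. Since `π`
is the identity modulo `(X i)`, its kernel is exactly `(X i)`, so `π ∘ φ⁻¹` is an endomorphism
killing `u` whose kernel is exactly `(u)`. Every endomorphism killing `u` kills `(u)`, so the
intersection of their kernels is `(u)`.
-/

open MvPolynomial

section

variable {R A : Type*} [CommRing R] [CommRing A] [Algebra R A]

theorem AlgHom.ker_le_of_comp_mkₐ_eq {I : Ideal A} (π : A →ₐ[R] A)
    (hπ : (Ideal.Quotient.mkₐ R I).comp π = Ideal.Quotient.mkₐ R I) :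
    RingHom.ker π.toRingHom ≤ I := by
  intro a ha
  rw [← Ideal.Quotient.eq_zero_iff_mem, ← Ideal.Quotient.mkₐ_eq_mk R, ← hπ, AlgHom.comp_apply,
    show π a = 0 from ha, map_zero]

theorem AlgHom.ker_comp_symm {B : Type*} [CommRing B] [Algebra R B]
    (f : A →ₐ[R] A) (e : A ≃ₐ[R] B) :
    RingHom.ker (f.comp e.symm.toAlgHom).toRingHom = (RingHom.ker f.toRingHom).map e := by
  ext b
  rw [Ideal.mem_map_of_equiv]
  refine ⟨fun hb => ⟨e.symm b, hb, e.apply_symm_apply b⟩, ?_⟩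
  rintro ⟨a, ha, rfl⟩
  simpa [RingHom.mem_ker] using ha

theorem iInf_ker_algHom_eq_span_of_ker_eq (u : A) (η₀ : A →ₐ[R] A)
    (hη₀ : RingHom.ker η₀.toRingHom = Ideal.span {u}) :
    (⨅ (η : A →ₐ[R] A) (_ : η u = 0), RingHom.ker η.toRingHom) = Ideal.span {u} := by
  have hη₀u : η₀ u = 0 := by
    change u ∈ RingHom.ker η₀.toRingHom
    exact hη₀ ▸ Ideal.mem_span_singleton_self u
  refine le_antisymm (hη₀ ▸ iInf₂_le η₀ hη₀u) (le_iInf₂ fun η hη => ?_)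
  rwa [Ideal.span_singleton_le_iff_mem]

end

namespace MvPolynomial

variable {σ R : Type*} [CommRing R] [DecidableEq σ]

theorem ker_aeval_update_X_zero (i : σ) :
    RingHom.ker (aeval (Function.update X i 0) : MvPolynomial σ R →ₐ[R] MvPolynomial σ R).toRingHom
      = Ideal.span {X i} := by
  refine le_antisymm (AlgHom.ker_le_of_comp_mkₐ_eq _ ?_) ?_
  · refine algHom_ext fun j => ?_
    rcases eq_or_ne j i with rfl | hj
    · simp
    · simp [hj]
  · rw [Ideal.span_singleton_le_iff_mem]
    simp [RingHom.mem_ker]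

theorem ker_aeval_update_X_zero_comp_symm {τ : Type*}
    (φ : MvPolynomial σ R ≃ₐ[R] MvPolynomial τ R) (i : σ) :
    RingHom.ker
        ((aeval (Function.update (X : σ → MvPolynomial σ R) i 0)).comp φ.symm.toAlgHom).toRingHom
      = Ideal.span {φ (X i)} := by
  rw [AlgHom.ker_comp_symm, ker_aeval_update_X_zero, Ideal.map_span, Set.image_singleton]

end MvPolynomial

theorem stmt_4 {P : Type} [Field P] {n : ℕ} (hn : 0 < n)
    (u : MvPolynomial (Fin n) P)
    (hbasic : ∃ φ : MvPolynomial (Fin n) P ≃ₐ[P] MvPolynomial (Fin n) P,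
      φ (X ⟨0, hn⟩) = u) :
    (⨅ (η : MvPolynomial (Fin n) P →ₐ[P] MvPolynomial (Fin n) P)
        (_ : η u = 0), RingHom.ker η.toRingHom) = Ideal.span {u} := by
  obtain ⟨φ, rfl⟩ := hbasic
  exact iInf_ker_algHom_eq_span_of_ker_eq _ _ (ker_aeval_update_X_zero_comp_symm φ _)
end

section
/- Let P be a field and W = P[x_1,...,x_n]. Let μ : W → W be a bijection generating an automorphism τ of End(W) (i.e., s ↦ μsμ⁻¹ is a monoid automorphism of End(W)), with μ(0) = 0, μ(1) = 1 and μ(x_i) = x_i for all i. Then for every α ∈ P, the ideal generated by μ(α·x_1) equals the ideal generated by x_1. -/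
/-!
Conjugation by `μ` fixes every endomorphism sending each variable to `0` or to a variable, since
`τ s (X i) = μ (s (X i))`. In particular it fixes the substitution `e : x₁ ↦ 0`, so
`e (μ (α x₁)) = μ (e (α x₁)) = μ 0 = 0`, i.e. `x₁ ∣ μ (α x₁)`. On the other hand
`μ (α x₁) = τ s (x₁)` for the scaling `s : xⱼ ↦ α xⱼ`, which is invertible, so `τ s` is an
automorphism and `μ (α x₁)` is irreducible. An irreducible multiple of the prime `x₁` is
associated to it.
-/

open MvPolynomial

namespace MvPolynomial

variable {σ R : Type*} [CommRing R] [DecidableEq σ]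

theorem X_dvd_sub_aeval_update_zero (i : σ) (p : MvPolynomial σ R) :
    X i ∣ p - aeval (Function.update X i 0) p := by
  rw [← Ideal.mem_span_singleton, ← Ideal.Quotient.eq]
  -- killing `X i` commutes with reduction modulo `X i`
  have hcomp : (Ideal.Quotient.mkₐ R (Ideal.span {X i})).comp (aeval (Function.update X i 0)) =
      Ideal.Quotient.mkₐ R (Ideal.span {(X i : MvPolynomial σ R)}) := by
    refine algHom_ext fun j => ?_
    rcases eq_or_ne j i with rfl | hj <;> simp [*]
  exact (DFunLike.congr_fun hcomp p).symm

theorem X_dvd_iff_aeval_update_zero_eq_zero {i : σ} {p : MvPolynomial σ R} :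
    X i ∣ p ↔ aeval (Function.update X i 0 : σ → MvPolynomial σ R) p = 0 := by
  refine ⟨?_, fun h => by simpa only [h, sub_zero] using X_dvd_sub_aeval_update_zero i p⟩
  rintro ⟨q, rfl⟩
  simp

end MvPolynomial

namespace MvPolynomial

variable {σ R : Type*} [CommSemiring R]

noncomputable def scale : R →* (MvPolynomial σ R →ₐ[R] MvPolynomial σ R) where
  toFun a := aeval fun j => C a * X j
  map_one' := algHom_ext fun j => by simp
  map_mul' a b := algHom_ext fun j => by
    simp only [AlgHom.mul_apply, aeval_X, map_mul, algHom_C, algebraMap_eq]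
    ring

@[simp]
theorem scale_X (a : R) (j : σ) : scale a (X j) = C a * X j := aeval_X _ _

end MvPolynomial

theorem AlgHom.irreducible_apply_of_isUnit {R A : Type*} [CommSemiring R] [Semiring A] [Algebra R A]
    {f : A →ₐ[R] A} (hf : IsUnit f) {x : A} (hx : Irreducible x) : Irreducible (f x) :=
  (MulEquiv.irreducible_iff (AlgEquiv.algHomUnitsEquiv R A hf.unit)).mpr hx

section Conjugation

variable {σ R : Type*} [CommSemiring R] {μ : MvPolynomial σ R → MvPolynomial σ R}
  {τ : (MvPolynomial σ R →ₐ[R] MvPolynomial σ R) ≃* (MvPolynomial σ R →ₐ[R] MvPolynomial σ R)}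

theorem conj_apply_X (hτ : ∀ s u, τ s (μ u) = μ (s u)) (hx : ∀ i, μ (X i) = X i)
    (s : MvPolynomial σ R →ₐ[R] MvPolynomial σ R) (i : σ) : τ s (X i) = μ (s (X i)) := by
  rw [← hτ, hx]

theorem conj_eq_self (hτ : ∀ s u, τ s (μ u) = μ (s u)) (hx : ∀ i, μ (X i) = X i)
    {s : MvPolynomial σ R →ₐ[R] MvPolynomial σ R} (hs : ∀ i, μ (s (X i)) = s (X i)) : τ s = s :=
  algHom_ext fun i => by rw [conj_apply_X hτ hx, hs]

end Conjugation

theorem stmt_6_general {P : Type} [Field P] {n : ℕ} (hn : 0 < n)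
    (μ : MvPolynomial (Fin n) P → MvPolynomial (Fin n) P)
    (h0 : μ 0 = 0)
    (hx : ∀ i : Fin n, μ (X i) = X i)
    (τ : (MvPolynomial (Fin n) P →ₐ[P] MvPolynomial (Fin n) P) ≃*
         (MvPolynomial (Fin n) P →ₐ[P] MvPolynomial (Fin n) P))
    (hτ : ∀ s u, (τ s) (μ u) = μ (s u))
    (α : P) (hα : α ≠ 0) :
    Ideal.span {μ (C α * X ⟨0, hn⟩)} = Ideal.span {(X ⟨0, hn⟩ : MvPolynomial (Fin n) P)} := by
  set i₀ : Fin n := ⟨0, hn⟩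
  set e : MvPolynomial (Fin n) P →ₐ[P] MvPolynomial (Fin n) P := aeval (Function.update X i₀ 0)
  have he : τ e = e := conj_eq_self hτ hx fun i => by
    rcases eq_or_ne i i₀ with rfl | hi <;> simp [e, *]
  have hdvd : X i₀ ∣ μ (C α * X i₀) := by
    rw [X_dvd_iff_aeval_update_zero_eq_zero]
    change e _ = 0
    rw [← he, hτ]
    simp [e, h0]
  have hirr : Irreducible (μ (C α * X i₀)) := by
    rw [← scale_X, ← conj_apply_X hτ hx]
    exact AlgHom.irreducible_apply_of_isUnit ((hα.isUnit.map scale).map τ) X_prime.irreducible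
  exact Ideal.span_singleton_eq_span_singleton.mpr (X_prime.irreducible.associated_of_dvd hirr hdvd).symm

theorem stmt_6 {P : Type} [Field P] {n : ℕ} (hn : 0 < n)
    (μ : MvPolynomial (Fin n) P → MvPolynomial (Fin n) P)
    (hbij : Function.Bijective μ) (h0 : μ 0 = 0) (h1 : μ 1 = 1)
    (hx : ∀ i : Fin n, μ (X i) = X i)
    (τ : (MvPolynomial (Fin n) P →ₐ[P] MvPolynomial (Fin n) P) ≃*
         (MvPolynomial (Fin n) P →ₐ[P] MvPolynomial (Fin n) P))
    (hτ : ∀ s u, (τ s) (μ u) = μ (s u))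
    (α : P) (hα : α ≠ 0) :
    Ideal.span {μ (C α * X ⟨0, hn⟩)} = Ideal.span {(X ⟨0, hn⟩ : MvPolynomial (Fin n) P)} :=
  stmt_6_general hn μ h0 hx τ hτ α hα
end
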